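/- (Theorem 3.1, energy part.) Let N ∈ ℕ, let L : ℂ^N → ℂ^N be a Hermitian (self-adjoint) linear map, β ∈ ℝ, C₀ > 0, ρ(ψ) = √(Σ_j |ψ_j|⁴ + C₀), τ > 0. Let a : Fin s → Fin s → ℝ, b : Fin s → ℝ satisfy b i * a i j + b j * a j i = b i * b j for all i, j, and set c i = Σ_j a i j. Given ψⁿ ∈ ℂ^N and qⁿ ∈ ℝ, suppose the stage values Ψ : Fin s → ℂ^N and Q : Fin s → ℝ satisfy Ψ i = exp(−i c i τ L) ψⁿ + τ Σ_j a i j • (exp(i (c j − c i) τ L) (k j)) and Q i = qⁿ + τ Σ_j a i j * l j, where k i = −i (β Q i / ρ(Ψ i)) • (|Ψ i|²Ψ i) and l i = (2 / ρ(Ψ i)) * Re⟨−i (L (Ψ i)), |Ψ i|²(Ψ i)⟩. Define ψⁿ⁺¹ = exp(−i τ L) ψⁿ + τ Σ_i b i • (exp(−i (1 − c i) τ L) (k i)) and qⁿ⁺¹ = qⁿ + τ Σ_i b i * l i. Then Re⟨L ψⁿ⁺¹, ψⁿ⁺¹⟩ + (β/2) (qⁿ⁺¹)² = Re⟨L ψⁿ,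 ψⁿ⟩ + (β/2) (qⁿ)², i.e. the step preserves the discrete modified energy Eⁿ = ⟨Lψⁿ, ψⁿ⟩ + (β/2)(qⁿ)² − (β/2)C₀. -/

import Mathlib

open Finset Complex

/-- The componentwise cubic nonlinearity `|ψ|²ψ`. -/
noncomputable def nlVec {N : ℕ} (ψ : EuclideanSpace ℂ (Fin N)) : EuclideanSpace ℂ (Fin N) :=
  WithLp.toLp 2 (fun j => (‖ψ j‖ : ℂ) ^ 2 * ψ j)

/-- The inner product `⟨x, y⟩ = ∑ j, x j * conj (y j)` of the paper. -/
noncomputable def pInner {N : ℕ} (x y : EuclideanSpace ℂ (Fin N)) : ℂ :=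
  ∑ j, x j * (starRingEnd ℂ) (y j)

/-- The SAV denominator `ρ(ψ) = √(∑ j |ψ j|⁴ + C₀)`. -/
noncomputable def savRho {N : ℕ} (C₀ : ℝ) (ψ : EuclideanSpace ℂ (Fin N)) : ℝ :=
  Real.sqrt ((∑ j, ‖ψ j‖ ^ 4) + C₀)

/-!
Pass to the interaction picture: with `U t = exp(-i t L)` and `vᵢ = U(-cᵢτ) kᵢ`, the stages and
the update read `Ψᵢ = U(cᵢτ) (ψⁿ + τ ∑ⱼ aᵢⱼ vⱼ)` and `ψⁿ⁺¹ = U(τ) (ψⁿ + τ ∑ᵢ bᵢ vᵢ)`. So on the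
extended state `(ψ, q)` the step is an ordinary Runge–Kutta step with slopes `(vᵢ, lᵢ)`, followed
by `U(τ)`. The unitaries `U t` commute with `L`, hence preserve the symmetric form
`B((x, q), (y, p)) = Re⟨x, L y⟩ + (β/2) q p` whose diagonal is the modified energy. For a
symplectic tableau every Runge–Kutta step with stages `Yᵢ` and slopes `Fᵢ` satisfies
`B(y₁, y₁) = B(y₀, y₀) + 2τ ∑ᵢ bᵢ B(Fᵢ, Yᵢ)`, and the SAV choice of `lᵢ` makes each slope
`B`-orthogonal to its stage: `B((kᵢ, lᵢ), (Ψᵢ, Qᵢ)) = 0`.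
-/

section RungeKutta

variable {M : Type*} [AddCommGroup M] [Module ℝ M] {s : ℕ}

def rkUpdate (y : M) (τ : ℝ) (w : Fin s → ℝ) (F : Fin s → M) : M :=
  y + τ • ∑ j, w j • F j

theorem rkUpdate_prodMk {M' : Type*} [AddCommGroup M'] [Module ℝ M'] (x : M) (x' : M')
    (τ : ℝ) (w : Fin s → ℝ) (F : Fin s → M) (F' : Fin s → M') :
    rkUpdate (x, x') τ w (fun j => (F j, F' j)) = (rkUpdate x τ w F, rkUpdate x' τ w F') := by
  ext <;> simp [rkUpdate, Prod.fst_sum, Prod.snd_sum]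

def IsSymplecticRK (a : Fin s → Fin s → ℝ) (b : Fin s → ℝ) : Prop :=
  ∀ i j, b i * a i j + b j * a j i = b i * b j

variable {a : Fin s → Fin s → ℝ} {b : Fin s → ℝ}

theorem IsSymplecticRK.sum_sum_mul_mul (hsymp : IsSymplecticRK a b)
    {G : Fin s → Fin s → ℝ} (hG : ∀ i j, G i j = G j i) :
    ∑ i, ∑ j, b i * b j * G i j = 2 * ∑ i, ∑ j, b i * a i j * G i j := by
  calc ∑ i, ∑ j, b i * b j * G i j
      = ∑ i, ∑ j, (b i * a i j * G i j + b j * a j i * G j i) := by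
        refine sum_congr rfl fun i _ => sum_congr rfl fun j _ => ?_
        rw [← hsymp, hG j i]; ring
    _ = ∑ i, ∑ j, b i * a i j * G i j + ∑ i, ∑ j, b j * a j i * G j i := by
        simp only [sum_add_distrib]
    _ = 2 * ∑ i, ∑ j, b i * a i j * G i j := by
        rw [sum_comm (f := fun i j => b j * a j i * G j i)]; ring

theorem LinearMap.BilinForm.IsSymm.apply_rkUpdate_self {B : LinearMap.BilinForm ℝ M}
    (hB : B.IsSymm) (hsymp : IsSymplecticRK a b) (y : M) (τ : ℝ) (F : Fin s → M) :
    B (rkUpdate y τ b F) (rkUpdate y τ b F)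
      = B y y + 2 * τ * ∑ i, b i * B (F i) (rkUpdate y τ (a i) F) := by
  have hdouble := hsymp.sum_sum_mul_mul (G := fun i j => B (F i) (F j)) fun i j => hB.eq _ _
  set S := ∑ i, b i • F i
  have hSy : B S y = ∑ i, b i * B (F i) y := by
    simp only [S, map_sum, map_smul, LinearMap.sum_apply, LinearMap.smul_apply, smul_eq_mul]
  have hSS : B S S = ∑ i, ∑ j, b i * b j * B (F i) (F j) := by
    simp only [S, map_sum, map_smul, LinearMap.sum_apply, LinearMap.smul_apply, smul_eq_mul,
      Finset.mul_sum]
    exact sum_comm.trans (sum_congr rfl fun i _ => sum_congr rfl fun j _ => by ring)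
  have hstages : ∑ i, b i * B (F i) (rkUpdate y τ (a i) F)
      = ∑ i, b i * B (F i) y + τ * ∑ i, ∑ j, b i * a i j * B (F i) (F j) := by
    simp only [rkUpdate, map_add, map_sum, map_smul, smul_eq_mul, mul_add, sum_add_distrib,
      Finset.mul_sum, mul_assoc, mul_left_comm τ]
  calc B (rkUpdate y τ b F) (rkUpdate y τ b F)
      = B y y + 2 * τ * B S y + τ ^ 2 * B S S := by
        change B (y + τ • S) (y + τ • S) = _
        simp only [map_add, map_smul, LinearMap.add_apply, LinearMap.smul_apply,
          smul_eq_mul, hB.eq y S]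
        ring
    _ = B y y + 2 * τ * ∑ i, b i * B (F i) (rkUpdate y τ (a i) F) := by
        rw [hSy, hSS, hstages, hdouble]; ring

end RungeKutta

section SchrodingerGroup

variable {E : Type*} [NormedAddCommGroup E] [InnerProductSpace ℂ E]

theorem ContinuousLinearMap.map_rkUpdate {s : ℕ} (T : E →L[ℂ] E) (x : E) (τ : ℝ)
    (w : Fin s → ℝ) (F : Fin s → E) :
    T (rkUpdate x τ w F) = rkUpdate (T x) τ w fun j => T (F j) := by
  simp only [rkUpdate, map_add, map_sum, map_smul_of_tower]

variable [CompleteSpace E] (L : E →L[ℂ] E)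

noncomputable def schrodingerGroup (t : ℝ) : E →L[ℂ] E := NormedSpace.exp ((-I * t) • L)

theorem exp_I_mul_smul_eq_schrodingerGroup (t : ℝ) :
    NormedSpace.exp ((I * t) • L) = schrodingerGroup L (-t) := by
  rw [schrodingerGroup, ofReal_neg, mul_neg, neg_mul, neg_neg]

theorem schrodingerGroup_zero : schrodingerGroup L 0 = 1 := by
  simp [schrodingerGroup]

theorem schrodingerGroup_add (t u : ℝ) :
    schrodingerGroup L (t + u) = schrodingerGroup L t * schrodingerGroup L u := by
  let +nondep : NormedAlgebra ℚ (E →L[ℂ] E) := .restrictScalars ℚ ℂ _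
  rw [schrodingerGroup, ofReal_add, mul_add, add_smul,
    NormedSpace.exp_add_of_commute (((Commute.refl L).smul_left _).smul_right _)]
  rfl

theorem schrodingerGroup_apply_apply (t u : ℝ) (x : E) :
    schrodingerGroup L t (schrodingerGroup L u x) = schrodingerGroup L (t + u) x := by
  rw [schrodingerGroup_add]; rfl

theorem rkUpdate_schrodingerGroup {s : ℕ} (t τ : ℝ) (x : E) (w t' : Fin s → ℝ)
    (K : Fin s → E) :
    rkUpdate (schrodingerGroup L t x) τ w (fun j => schrodingerGroup L (t - t' j) (K j))
      = schrodingerGroup L t (rkUpdate x τ w fun j => schrodingerGroup L (-t' j) (K j)) := by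
  simp only [ContinuousLinearMap.map_rkUpdate, schrodingerGroup_apply_apply, sub_eq_add_neg]

theorem commute_schrodingerGroup (t : ℝ) : Commute L (schrodingerGroup L t) :=
  ((Commute.refl L).smul_right _).exp_right

variable {L}

theorem IsSelfAdjoint.schrodingerGroup_mem_unitary (hL : IsSelfAdjoint L) (t : ℝ) :
    schrodingerGroup L t ∈ unitary (E →L[ℂ] E) := by
  let +nondep : NormedAlgebra ℚ (E →L[ℂ] E) := .restrictScalars ℚ ℂ _
  refine NormedSpace.exp_mem_unitary_of_mem_skewAdjoint (hL.smul_mem_skewAdjoint ?_)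
  simp [skewAdjoint.mem_iff]

theorem IsSelfAdjoint.inner_schrodingerGroup_apply (hL : IsSelfAdjoint L) (t : ℝ) (x y : E) :
    inner ℂ (schrodingerGroup L t x) (L (schrodingerGroup L t y)) = inner ℂ x (L y) := by
  have hLU : L (schrodingerGroup L t y) = schrodingerGroup L t (L y) :=
    DFunLike.congr_fun (commute_schrodingerGroup L t).eq y
  rw [hLU, ContinuousLinearMap.inner_map_map_of_mem_unitary (hL.schrodingerGroup_mem_unitary t)]

end SchrodingerGroup

theorem pInner_eq_inner {N : ℕ} (x y : EuclideanSpace ℂ (Fin N)) :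
    pInner x y = inner ℂ y x := by
  simp only [pInner, PiLp.inner_apply, RCLike.inner_apply]

theorem isSelfAdjoint_of_pInner_map_eq {N : ℕ}
    {L : EuclideanSpace ℂ (Fin N) →L[ℂ] EuclideanSpace ℂ (Fin N)}
    (hL : ∀ x y, pInner (L x) y = pInner x (L y)) : IsSelfAdjoint L := by
  refine ContinuousLinearMap.isSelfAdjoint_iff_isSymmetric.mpr fun x y => ?_
  have h := hL y x
  rw [pInner_eq_inner, pInner_eq_inner] at h
  exact h.symm

section EnergyForm

variable {E : Type*} [NormedAddCommGroup E] [InnerProductSpace ℂ E] (L : E →L[ℂ] E)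

noncomputable def energyForm (β : ℝ) : LinearMap.BilinForm ℝ (E × ℝ) :=
  LinearMap.mk₂ ℝ (fun u w => re (inner ℂ u.1 (L w.1)) + β / 2 * (u.2 * w.2))
    (fun _ _ _ => by simp only [Prod.fst_add, Prod.snd_add, inner_add_left, add_re]; ring)
    (fun _ _ _ => by
      simp only [Prod.smul_fst, Prod.smul_snd, smul_eq_mul, ← Complex.coe_smul, inner_smul_left,
        conj_ofReal, re_ofReal_mul]
      ring)
    (fun _ _ _ => by simp only [Prod.fst_add, Prod.snd_add, map_add, inner_add_right, add_re]; ring)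
    (fun _ _ _ => by
      simp only [Prod.smul_fst, Prod.smul_snd, smul_eq_mul, ← Complex.coe_smul, map_smul,
        inner_smul_right, re_ofReal_mul]
      ring)

theorem energyForm_apply (β : ℝ) (u w : E × ℝ) :
    energyForm L β u w = re (inner ℂ u.1 (L w.1)) + β / 2 * (u.2 * w.2) := rfl

theorem energyForm_sav_eq_zero (β ρ Q : ℝ) (n w : E) :
    energyForm L β
      ((-I * ((β * Q / ρ : ℝ) : ℂ)) • n, 2 / ρ * re (inner ℂ n (-I • L w))) (w, Q) = 0 := by
  simp only [energyForm_apply, inner_smul_left, inner_smul_right, map_mul, map_neg, conj_I,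
    conj_ofReal, neg_mul, neg_neg, mul_re, mul_im, I_re, I_im, ofReal_re, ofReal_im, neg_re]
  ring

variable {L} [CompleteSpace E]

theorem IsSelfAdjoint.energyForm_isSymm (hL : IsSelfAdjoint L) (β : ℝ) :
    (energyForm L β).IsSymm := by
  refine ⟨fun u w => ?_⟩
  have h : inner ℂ (L u.1) w.1 = inner ℂ u.1 (L w.1) := hL.isSymmetric u.1 w.1
  rw [energyForm_apply, energyForm_apply, ← h, ← inner_conj_symm, conj_re, mul_comm u.2]

theorem IsSelfAdjoint.energyForm_schrodingerGroup (hL : IsSelfAdjoint L) (β t : ℝ) (x y : E)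
    (q p : ℝ) :
    energyForm L β (schrodingerGroup L t x, q) (schrodingerGroup L t y, p)
      = energyForm L β (x, q) (y, p) := by
  simp only [energyForm_apply, hL.inner_schrodingerGroup_apply]

end EnergyForm

theorem energyForm_self {N : ℕ}
    (L : EuclideanSpace ℂ (Fin N) →L[ℂ] EuclideanSpace ℂ (Fin N)) (β : ℝ)
    (x : EuclideanSpace ℂ (Fin N)) (q : ℝ) :
    energyForm L β (x, q) (x, q) = (pInner (L x) x).re + β / 2 * q ^ 2 := by
  rw [energyForm_apply, pInner_eq_inner, sq]

theorem ESAV_RK_energy_conservation_general {N : ℕ}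
    (L : EuclideanSpace ℂ (Fin N) →L[ℂ] EuclideanSpace ℂ (Fin N))
    (hL : ∀ x y, pInner (L x) y = pInner x (L y))
    (β : ℝ) (C₀ : ℝ) (τ : ℝ)
    (s : ℕ) (a : Fin s → Fin s → ℝ) (b : Fin s → ℝ)
    (hsymp : ∀ i j, b i * a i j + b j * a j i = b i * b j)
    (c : Fin s → ℝ)
    (ψn : EuclideanSpace ℂ (Fin N)) (qn : ℝ)
    (Ψ : Fin s → EuclideanSpace ℂ (Fin N)) (Q : Fin s → ℝ)
    (k : Fin s → EuclideanSpace ℂ (Fin N)) (l : Fin s → ℝ)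
    (hk : ∀ i, k i = (-Complex.I * ((β * Q i / savRho C₀ (Ψ i) : ℝ) : ℂ)) • nlVec (Ψ i))
    (hl : ∀ i, l i = (2 / savRho C₀ (Ψ i)) *
        (pInner ((-Complex.I) • L (Ψ i)) (nlVec (Ψ i))).re)
    (hΨ : ∀ i, Ψ i = NormedSpace.exp (((-Complex.I) * ((c i * τ : ℝ) : ℂ)) • L) ψn
        + τ • ∑ j, a i j •
            NormedSpace.exp ((Complex.I * (((c j - c i) * τ : ℝ) : ℂ)) • L) (k j))
    (hQ : ∀ i, Q i = qn + τ * ∑ j, a i j * l j)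
    (ψn1 : EuclideanSpace ℂ (Fin N)) (qn1 : ℝ)
    (hψn1 : ψn1 = NormedSpace.exp (((-Complex.I) * ((τ : ℝ) : ℂ)) • L) ψn
        + τ • ∑ i, b i •
            NormedSpace.exp (((-Complex.I) * (((1 - c i) * τ : ℝ) : ℂ)) • L) (k i))
    (hqn1 : qn1 = qn + τ * ∑ i, b i * l i) :
    (pInner (L ψn1) ψn1).re + (β / 2) * qn1 ^ 2
      = (pInner (L ψn) ψn).re + (β / 2) * qn ^ 2 := by
  have hsa : IsSelfAdjoint L := isSelfAdjoint_of_pInner_map_eq hL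
  set U := schrodingerGroup L
  set v : Fin s → EuclideanSpace ℂ (Fin N) := fun i => U (-(c i * τ)) (k i)
  have hkv : ∀ i, k i = U (c i * τ) (v i) := fun i => by
    rw [schrodingerGroup_apply_apply, add_neg_cancel, schrodingerGroup_zero]; rfl
  have hΨv : ∀ i, Ψ i = U (c i * τ) (rkUpdate ψn τ (a i) v) := fun i => by
    rw [← rkUpdate_schrodingerGroup, hΨ i]
    simp only [exp_I_mul_smul_eq_schrodingerGroup, sub_mul, neg_sub]
    rfl
  have hψn1v : ψn1 = U τ (rkUpdate ψn τ b v) := by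
    rw [← rkUpdate_schrodingerGroup, hψn1]
    simp only [sub_mul, one_mul]
    rfl
  have hstage : ∀ i,
      energyForm L β (v i, l i) (rkUpdate (ψn, qn) τ (a i) fun j => (v j, l j)) = 0 := by
    intro i
    have hQ' : rkUpdate qn τ (a i) l = Q i := (hQ i).symm
    rw [rkUpdate_prodMk, ← hsa.energyForm_schrodingerGroup β (c i * τ), ← hkv, ← hΨv, hQ',
      hk i, hl i, pInner_eq_inner]
    exact energyForm_sav_eq_zero L β _ _ _ _
  calc (pInner (L ψn1) ψn1).re + (β / 2) * qn1 ^ 2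
      = energyForm L β (rkUpdate (ψn, qn) τ b fun j => (v j, l j))
          (rkUpdate (ψn, qn) τ b fun j => (v j, l j)) := by
        rw [rkUpdate_prodMk, ← hsa.energyForm_schrodingerGroup β τ, ← hψn1v, energyForm_self,
          hqn1]
        rfl
    _ = (pInner (L ψn) ψn).re + (β / 2) * qn ^ 2 := by
        rw [(hsa.energyForm_isSymm β).apply_rkUpdate_self hsymp, sum_eq_zero fun i _ => by
          rw [hstage i, mul_zero], mul_zero, add_zero, energyForm_self]

/-- Theorem 3.1 (energy part): a symplectic ESAV-RK step preserves the discrete modified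
energy `Eⁿ = ⟨Lψⁿ, ψⁿ⟩ + (β/2)(qⁿ)² − (β/2)C₀`. -/
theorem ESAV_RK_energy_conservation {N : ℕ}
    (L : EuclideanSpace ℂ (Fin N) →L[ℂ] EuclideanSpace ℂ (Fin N))
    (hL : ∀ x y, pInner (L x) y = pInner x (L y))
    (β : ℝ) (C₀ : ℝ) (hC₀ : 0 < C₀) (τ : ℝ) (hτ : 0 < τ)
    (s : ℕ) (a : Fin s → Fin s → ℝ) (b : Fin s → ℝ)
    (hsymp : ∀ i j, b i * a i j + b j * a j i = b i * b j)
    (c : Fin s → ℝ) (hc : ∀ i, c i = ∑ j, a i j)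
    (ψn : EuclideanSpace ℂ (Fin N)) (qn : ℝ)
    (Ψ : Fin s → EuclideanSpace ℂ (Fin N)) (Q : Fin s → ℝ)
    (k : Fin s → EuclideanSpace ℂ (Fin N)) (l : Fin s → ℝ)
    (hk : ∀ i, k i = (-Complex.I * ((β * Q i / savRho C₀ (Ψ i) : ℝ) : ℂ)) • nlVec (Ψ i))
    (hl : ∀ i, l i = (2 / savRho C₀ (Ψ i)) *
        (pInner ((-Complex.I) • L (Ψ i)) (nlVec (Ψ i))).re)
    (hΨ : ∀ i, Ψ i = NormedSpace.exp (((-Complex.I) * ((c i * τ : ℝ) : ℂ)) • L) ψn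
        + τ • ∑ j, a i j •
            NormedSpace.exp ((Complex.I * (((c j - c i) * τ : ℝ) : ℂ)) • L) (k j))
    (hQ : ∀ i, Q i = qn + τ * ∑ j, a i j * l j)
    (ψn1 : EuclideanSpace ℂ (Fin N)) (qn1 : ℝ)
    (hψn1 : ψn1 = NormedSpace.exp (((-Complex.I) * ((τ : ℝ) : ℂ)) • L) ψn
        + τ • ∑ i, b i •
            NormedSpace.exp (((-Complex.I) * (((1 - c i) * τ : ℝ) : ℂ)) • L) (k i))
    (hqn1 : qn1 = qn + τ * ∑ i, b i * l i) :
    (pInner (L ψn1) ψn1).re + (β / 2) * qn1 ^ 2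
      = (pInner (L ψn) ψn).re + (β / 2) * qn ^ 2 :=
  ESAV_RK_energy_conservation_general L hL β C₀ τ s a b hsymp c ψn qn Ψ Q k l hk hl hΨ hQ ψn1 qn1
    hψn1 hqn1
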